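/- Let ρ = (ρ_i(s))_{i∈[n], s∈[k]^n} be performance ratios (ρ_i(s) ∈ (0,1] for all i,s, and for every profile s at least one agent i has ρ_i(s) = 1) with min_{i,s} ρ_i(s) ≥ 1 − 1/((n·k)² + 1). Then there exists a family of value functions v_i : [k]^n → ℝ_{>0} that is nondecreasing in every signal coordinate, satisfies submodularity over signals (SOS), and induces the given ratios: v_i(s)/max_{j∈[n]} v_j(s) = ρ_i(s) for all i, s. Likewise, there exists a family of cost functions c_i : [k]^n → ℝ_{>0}, nonincreasing in every coordinate and SOS, with min_{j∈[n]} c_j(s)/c_i(s) = ρ_i(s) for all i, s. -/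

import Mathlib

/-!
Put `S(s) = ∑ₗ sₗ`, so `0 ≤ S(s) < P := n k`, and `φ(m) = (P - m)²`. On integers below `P`, `φ`
drops by at least `1` per step, its second differences `φ(p) + φ(p+d+e) - φ(p+d) - φ(p+e) = 2de`
are at least `2`, and both `φ` and `1 + P² - φ` take values in `[1, P²]`. Hence `1 + P² - φ(S s)`
and `φ(S s)` satisfy the monotonicity and SOS inequalities with slack at least `1`, which a
multiplicative perturbation by a factor in `[1 - ε, 1]` (resp. `[1, 1/(1 - ε)]`) cannot destroy
once `ε P² ≤ 1`. With `v i s = ρ i s · (1 + P² - φ(S s))` and `c i s = φ(S s) / ρ i s`, an agent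
with `ρ i s = 1` attains the maximal value (minimal cost), which gives the ratios.
-/

open Finset Function

section Signals

variable {n k : ℕ}

def signalSum (s : Fin n → Fin k) : ℕ := ∑ l, (s l : ℕ)

def MonotoneInSignals (w : (Fin n → Fin k) → ℝ) : Prop :=
  ∀ (j : Fin n) (s : Fin n → Fin k) (a b : Fin k), a ≤ b → w (update s j a) ≤ w (update s j b)

def SubmodularOverSignals (w : (Fin n → Fin k) → ℝ) : Prop :=
  ∀ (j : Fin n) (a b : Fin k), a ≤ b → ∀ s s' : Fin n → Fin k, (∀ l, l ≠ j → s l ≤ s' l) →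
    w (update s' j b) - w (update s' j a) ≤ w (update s j b) - w (update s j a)

lemma signalSum_lt [NeZero n] (s : Fin n → Fin k) : signalSum s < n * k := by
  have := sum_lt_sum_of_nonempty univ_nonempty fun l (_ : l ∈ univ) => (s l).isLt
  simpa [signalSum, mul_comm] using this

lemma signalSum_update (s : Fin n → Fin k) (j : Fin n) (a : Fin k) :
    signalSum (update s j a) = a + ∑ l ∈ univ.erase j, (s l : ℕ) := by
  rw [signalSum, ← add_sum_erase _ _ (mem_univ j), update_self]
  congr 1
  exact sum_congr rfl fun l hl => by rw [update_of_ne (ne_of_mem_erase hl)]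

lemma signalSum_update_lt_update (s : Fin n → Fin k) (j : Fin n) {a b : Fin k} (h : a < b) :
    signalSum (update s j a) < signalSum (update s j b) := by
  simpa [signalSum_update] using h

lemma signalSum_update_add_update (s s' : Fin n → Fin k) (j : Fin n) (a b : Fin k) :
    signalSum (update s j a) + signalSum (update s' j b)
      = signalSum (update s j b) + signalSum (update s' j a) := by
  simp only [signalSum_update]
  ring

lemma signalSum_update_lt_update_of_lt {s s' : Fin n → Fin k} {j : Fin n}
    (hle : ∀ l, l ≠ j → s l ≤ s' l) (hlt : ∃ l, l ≠ j ∧ s l < s' l) (a : Fin k) :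
    signalSum (update s j a) < signalSum (update s' j a) := by
  obtain ⟨l, hlj, hl⟩ := hlt
  rw [signalSum_update, signalSum_update]
  exact Nat.add_lt_add_left (sum_lt_sum (fun m hm => hle m (ne_of_mem_erase hm))
    ⟨l, mem_erase.2 ⟨hlj, mem_univ l⟩, hl⟩) _

lemma update_eq_update_of_forall_ne_eq {s s' : Fin n → Fin k} {j : Fin n}
    (h : ∀ l, l ≠ j → s l = s' l) (a : Fin k) : update s j a = update s' j a := by
  funext l
  by_cases hlj : l = j
  · subst hlj
    simp
  · simp [update_of_ne hlj, h l hlj]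


theorem monotoneInSignals_of_band [NeZero n] {w : (Fin n → Fin k) → ℝ} {L H : ℕ → ℝ}
    (hw : ∀ s, L (signalSum s) ≤ w s ∧ w s ≤ H (signalSum s))
    (hLH : ∀ p q, p < q → q < n * k → H p ≤ L q) : MonotoneInSignals w := by
  intro j s a b hab
  rcases hab.lt_or_eq with hab | rfl
  · calc w (update s j a) ≤ H _ := (hw _).2
      _ ≤ L _ := hLH _ _ (signalSum_update_lt_update s j hab) (signalSum_lt _)
      _ ≤ w (update s j b) := (hw _).1
  · exact le_rfl

theorem submodularOverSignals_of_band [NeZero n] {w : (Fin n → Fin k) → ℝ} {L H : ℕ → ℝ}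
    (hw : ∀ s, L (signalSum s) ≤ w s ∧ w s ≤ H (signalSum s))
    (hLH : ∀ p q r t, p < q → p < r → p + t = q + r → t < n * k → H p + H t ≤ L q + L r) :
    SubmodularOverSignals w := by
  intro j a b hab s s' hle
  rcases hab.lt_or_eq with hab | rfl
  · by_cases hlt : ∃ l, l ≠ j ∧ s l < s' l
    · have := hLH _ _ _ _ (signalSum_update_lt_update s j hab)
        (signalSum_update_lt_update_of_lt hle hlt a) (signalSum_update_add_update s s' j a b)
        (signalSum_lt _)
      linarith [(hw (update s j a)).2, (hw (update s' j b)).2, (hw (update s j b)).1,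
        (hw (update s' j a)).1]
    · simp only [not_exists, not_and, not_lt] at hlt
      have heq : ∀ l, l ≠ j → s l = s' l := fun l hl => (hle l hl).antisymm (hlt l hl)
      rw [update_eq_update_of_forall_ne_eq heq a, update_eq_update_of_forall_ne_eq heq b]
  · simp

end Signals

lemma sq_sub_add_one_le_sq_sub {P p q : ℝ} (hpq : p + 1 ≤ q) (hq : q + 1 ≤ P) :
    (P - q) ^ 2 + 1 ≤ (P - p) ^ 2 := by
  nlinarith

lemma sq_sub_add_sq_sub_add_two_le {P p q r t : ℝ} (hq : p + 1 ≤ q) (hr : p + 1 ≤ r)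
    (ht : p + t = q + r) : (P - q) ^ 2 + (P - r) ^ 2 + 2 ≤ (P - p) ^ 2 + (P - t) ^ 2 := by
  obtain rfl : t = q + r - p := by linarith
  nlinarith [one_le_mul_of_one_le_of_one_le (by linarith : 1 ≤ q - p) (by linarith : 1 ≤ r - p)]

lemma one_le_sq_sub_le_sq {P m : ℝ} (hm : 0 ≤ m) (hmP : m + 1 ≤ P) :
    1 ≤ (P - m) ^ 2 ∧ (P - m) ^ 2 ≤ P ^ 2 := by
  constructor <;> nlinarith

lemma Finset.sup'_mul_eq_of_le_one {ι : Type*} {s : Finset ι} (hs : s.Nonempty) {f : ι → ℝ}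
    (hf : ∀ i ∈ s, f i ≤ 1) (hf1 : ∃ i ∈ s, f i = 1) {x : ℝ} (hx : 0 ≤ x) :
    s.sup' hs (fun i => f i * x) = x := by
  obtain ⟨i, hi, h1⟩ := hf1
  exact le_antisymm (sup'_le _ _ fun j hj => mul_le_of_le_one_left hx (hf j hj))
    (le_sup'_of_le _ hi (by rw [h1, one_mul]))

lemma Finset.inf'_div_eq_of_le_one {ι : Type*} {s : Finset ι} (hs : s.Nonempty) {f : ι → ℝ}
    (hf : ∀ i ∈ s, 0 < f i ∧ f i ≤ 1) (hf1 : ∃ i ∈ s, f i = 1) {x : ℝ} (hx : 0 ≤ x) :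
    s.inf' hs (fun i => x / f i) = x := by
  obtain ⟨i, hi, h1⟩ := hf1
  exact le_antisymm (inf'_le_of_le _ hi (by rw [h1, div_one]))
    (le_inf' _ _ fun j hj => le_div_self hx (hf j hj).1 (hf j hj).2)

section Construction

variable {n k : ℕ} [NeZero n] (ρ : Fin n → (Fin n → Fin k) → ℝ)
  (hρ : ∀ i s, 0 < ρ i s ∧ ρ i s ≤ 1) (hρ1 : ∀ s, ∃ i, ρ i s = 1) {ε : ℝ}
  (hmin : ∀ i s, 1 - ε ≤ ρ i s)
include hρ hρ1 hmin

theorem exists_value_functions (hε0 : 0 ≤ ε) (hε : ε * ((n : ℝ) * k) ^ 2 ≤ 1) :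
    ∃ v : Fin n → (Fin n → Fin k) → ℝ, (∀ i s, 0 < v i s) ∧ (∀ i, MonotoneInSignals (v i)) ∧
      (∀ i, SubmodularOverSignals (v i)) ∧
      ∀ i s, v i s / univ.sup' univ_nonempty (fun j => v j s) = ρ i s := by
  have hP : ∀ m, m < n * k → (m : ℝ) + 1 ≤ n * k := fun m hm => by exact_mod_cast hm
  set P : ℝ := n * k
  set g : ℕ → ℝ := fun m => 1 + P ^ 2 - (P - m) ^ 2
  have hg : ∀ m, m < n * k → 1 ≤ g m ∧ g m ≤ P ^ 2 := fun m hm => by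
    have := one_le_sq_sub_le_sq (Nat.cast_nonneg m) (hP m hm)
    constructor <;> linarith
  have hεg : ∀ m, m < n * k → ε * g m ≤ 1 := fun m hm =>
    (mul_le_mul_of_nonneg_left (hg m hm).2 hε0).trans hε
  have hband : ∀ i s, (1 - ε) * g (signalSum s) ≤ ρ i s * g (signalSum s) ∧
      ρ i s * g (signalSum s) ≤ g (signalSum s) := fun i s =>
    have hgs := (hg _ (signalSum_lt s)).1
    ⟨by nlinarith [hmin i s], mul_le_of_le_one_left (by linarith) (hρ i s).2⟩
  refine ⟨fun i s => ρ i s * g (signalSum s), fun i s => ?_, fun i => ?_, fun i => ?_,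
    fun i s => ?_⟩
  · exact mul_pos (hρ i s).1 (by linarith [(hg _ (signalSum_lt s)).1])
  · refine monotoneInSignals_of_band (L := fun m => (1 - ε) * g m) (hband i) fun p q hpq hq => ?_
    have := sq_sub_add_one_le_sq_sub (P := P) (by exact_mod_cast hpq : (p : ℝ) + 1 ≤ q) (hP q hq)
    linarith [hεg q hq]
  · refine submodularOverSignals_of_band (L := fun m => (1 - ε) * g m) (hband i)
      fun p q r t hpq hpr hpt ht => ?_
    have := sq_sub_add_sq_sub_add_two_le (P := P) (by exact_mod_cast hpq : (p : ℝ) + 1 ≤ q)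
      (by exact_mod_cast hpr : (p : ℝ) + 1 ≤ r) (by exact_mod_cast hpt : (p : ℝ) + t = q + r)
    linarith [hεg q (by omega), hεg r (by omega)]
  · obtain ⟨j, hj⟩ := hρ1 s
    have hgs := (hg _ (signalSum_lt s)).1
    rw [univ.sup'_mul_eq_of_le_one univ_nonempty (fun j _ => (hρ j s).2) ⟨j, mem_univ j, hj⟩
      (by linarith), mul_div_cancel_right₀ _ (by linarith)]

theorem exists_cost_functions (hε0 : 0 ≤ ε) (hε1 : ε < 1) (hε : ε * ((n : ℝ) * k) ^ 2 ≤ 1) :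
    ∃ c : Fin n → (Fin n → Fin k) → ℝ, (∀ i s, 0 < c i s) ∧
      (∀ i, MonotoneInSignals fun s => -c i s) ∧ (∀ i, SubmodularOverSignals fun s => -c i s) ∧
      ∀ i s, univ.inf' univ_nonempty (fun j => c j s) / c i s = ρ i s := by
  have hP : ∀ m, m < n * k → (m : ℝ) + 1 ≤ n * k := fun m hm => by exact_mod_cast hm
  set P : ℝ := n * k
  set φ : ℕ → ℝ := fun m => (P - m) ^ 2
  have hφ : ∀ m, m < n * k → 1 ≤ φ m ∧ φ m ≤ P ^ 2 := fun m hm =>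
    one_le_sq_sub_le_sq (Nat.cast_nonneg m) (hP m hm)
  have hεφ : ∀ m, m < n * k → ε * φ m ≤ 1 := fun m hm =>
    (mul_le_mul_of_nonneg_left (hφ m hm).2 hε0).trans hε
  have hε1' : 0 < 1 - ε := by linarith
  have hband : ∀ i s, -φ (signalSum s) / (1 - ε) ≤ -(φ (signalSum s) / ρ i s) ∧
      -(φ (signalSum s) / ρ i s) ≤ -φ (signalSum s) := fun i s => by
    have hφs := (hφ _ (signalSum_lt s)).1
    rw [neg_div, neg_le_neg_iff, neg_le_neg_iff]
    exact ⟨div_le_div_of_nonneg_left (by linarith) hε1' (hmin i s),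
      le_div_self (by linarith) (hρ i s).1 (hρ i s).2⟩
  refine ⟨fun i s => φ (signalSum s) / ρ i s, fun i s => ?_, fun i => ?_, fun i => ?_,
    fun i s => ?_⟩
  · exact div_pos (by linarith [(hφ _ (signalSum_lt s)).1]) (hρ i s).1
  · refine monotoneInSignals_of_band (L := fun m => -φ m / (1 - ε)) (H := fun m => -φ m)
      (hband i) fun p q hpq hq => ?_
    have := sq_sub_add_one_le_sq_sub (P := P) (by exact_mod_cast hpq : (p : ℝ) + 1 ≤ q) (hP q hq)
    rw [neg_div, neg_le_neg_iff, div_le_iff₀ hε1']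
    linarith [hεφ p (by omega)]
  · refine submodularOverSignals_of_band (L := fun m => -φ m / (1 - ε)) (H := fun m => -φ m)
      (hband i) fun p q r t hpq hpr hpt ht => ?_
    have := sq_sub_add_sq_sub_add_two_le (P := P) (by exact_mod_cast hpq : (p : ℝ) + 1 ≤ q)
      (by exact_mod_cast hpr : (p : ℝ) + 1 ≤ r) (by exact_mod_cast hpt : (p : ℝ) + t = q + r)
    rw [← add_div, le_div_iff₀ hε1']
    linarith [hεφ p (by omega), hεφ t ht]
  · obtain ⟨j, hj⟩ := hρ1 s
    have hφs := (hφ _ (signalSum_lt s)).1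
    rw [univ.inf'_div_eq_of_le_one univ_nonempty (fun j _ => hρ j s) ⟨j, mem_univ j, hj⟩
      (by linarith), div_div_cancel₀ (by linarith)]

end Construction

theorem stmt19 (n k : ℕ) [NeZero n] [NeZero k]
    (ρ : Fin n → (Fin n → Fin k) → ℝ)
    (hρ : ∀ i s, 0 < ρ i s ∧ ρ i s ≤ 1)
    (hρ1 : ∀ s, ∃ i, ρ i s = 1)
    (hmin : ∀ i s, 1 - 1 / (((n : ℝ) * k) ^ 2 + 1) ≤ ρ i s) :
    (∃ v : Fin n → (Fin n → Fin k) → ℝ,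
      (∀ i s, 0 < v i s) ∧
      -- nondecreasing in every signal coordinate
      (∀ (i j : Fin n) (s : Fin n → Fin k) (a b : Fin k), a ≤ b →
        v i (Function.update s j a) ≤ v i (Function.update s j b)) ∧
      -- submodularity over signals
      (∀ (i j : Fin n) (a b : Fin k), a ≤ b → ∀ s s' : Fin n → Fin k,
        (∀ l, l ≠ j → s l ≤ s' l) →
        v i (Function.update s' j b) - v i (Function.update s' j a)
          ≤ v i (Function.update s j b) - v i (Function.update s j a)) ∧
      -- induces the given ratios
      (∀ i s, v i s / (Finset.univ.sup' Finset.univ_nonempty (fun j => v j s)) = ρ i s)) ∧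
    (∃ c : Fin n → (Fin n → Fin k) → ℝ,
      (∀ i s, 0 < c i s) ∧
      -- nonincreasing in every signal coordinate
      (∀ (i j : Fin n) (s : Fin n → Fin k) (a b : Fin k), a ≤ b →
        c i (Function.update s j b) ≤ c i (Function.update s j a)) ∧
      -- submodularity over signals
      (∀ (i j : Fin n) (a b : Fin k), a ≤ b → ∀ s s' : Fin n → Fin k,
        (∀ l, l ≠ j → s l ≤ s' l) →
        c i (Function.update s' j a) - c i (Function.update s' j b)
          ≤ c i (Function.update s j a) - c i (Function.update s j b)) ∧
      -- induces the given ratios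
      (∀ i s, (Finset.univ.inf' Finset.univ_nonempty (fun j => c j s)) / c i s = ρ i s)) := by
  have hnk : (0 : ℝ) < ((n : ℝ) * k) ^ 2 := by
    have : (0 : ℝ) < n * k := by exact_mod_cast Nat.mul_pos (NeZero.pos n) (NeZero.pos k)
    positivity
  have hε0 : 0 ≤ 1 / (((n : ℝ) * k) ^ 2 + 1) := by positivity
  have hε1 : 1 / (((n : ℝ) * k) ^ 2 + 1) < 1 := by
    rw [div_lt_one (by positivity)]
    linarith
  have hε : 1 / (((n : ℝ) * k) ^ 2 + 1) * ((n : ℝ) * k) ^ 2 ≤ 1 := by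
    rw [one_div_mul_eq_div, div_le_one (by positivity)]
    linarith
  obtain ⟨v, hv0, hvmono, hvsos, hvρ⟩ := exists_value_functions ρ hρ hρ1 hmin hε0 hε
  obtain ⟨c, hc0, hcmono, hcsos, hcρ⟩ := exists_cost_functions ρ hρ hρ1 hmin hε0 hε1 hε
  refine ⟨⟨v, hv0, hvmono, hvsos, hvρ⟩,
    ⟨c, hc0, fun i j s a b hab => ?_, fun i j a b hab s s' h => ?_, hcρ⟩⟩
  · exact neg_le_neg_iff.1 (hcmono i j s a b hab)
  · linarith [hcsos i j a b hab s s' h]
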